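/- Let R be a commutative ring, n ≥ 2, and let (g_{ab}) be a symmetric n×n family of elements of R⟪X⟫ each supported in [-v, ∞), such that the matrix ((g_{ab})(-v)) of lowest-order coefficients is invertible over R. Then there exists a unique symmetric family (g^{ab}) of elements of R⟪X⟫ supported in [v, ∞) with g_{ai} g^{ib} = δ_a^b, and its lowest-order coefficients form the inverse matrix of ((g_{ab})(-v)). -/

import Mathlib

/-- A subset of ℝ is discrete iff it has no limit (accumulation) points in ℝ. -/
def DiscreteSubset (A : Set ℝ) : Prop := ∀ x : ℝ, ¬ AccPt x (Filter.principal A)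

/-- Membership in the algebra R⟪X⟫: discrete support bounded from below. -/
def DBBSupp {R : Type*} [CommRing R] (f : ℝ → R) : Prop :=
  DiscreteSubset (Function.support f) ∧ BddBelow (Function.support f)

/-- The Cauchy product (f·g)(m) = Σ_{p+q=m} f(p)g(q). -/
noncomputable def cauchy {R : Type*} [CommRing R] (f g : ℝ → R) : ℝ → R :=
  fun m => ∑ᶠ p : ℝ, f p * g (m - p)

open Classical in
/-- The identity X⁰ of R⟪X⟫. -/
noncomputable def oneX {R : Type*} [CommRing R] : ℝ → R :=
  fun m => if m = 0 then 1 else 0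

/-!
Embedding R⟪X⟫ into the Hahn series ring `HahnSeries ℝ R` turns the Cauchy product into
multiplication, so the family `(g a b)` becomes a matrix `G` and the conditions on `(g^{ab})` say
that its Hahn matrix `K` satisfies `G * K = 1`. Uniqueness and symmetry of `K` are then matrix
algebra. For existence, multiply `G` by `X^v`: its entries become supported in the additive
submonoid `P` generated by their supports, which is nonnegative and has only finitely many
elements below any bound. Over `HahnSeries P R` the coefficient at `0` is a ring homomorphism
that reflects units, so the shifted matrix is invertible there, and the entries of
`K = X^v • (X^v • G)⁻¹` are supported in `v + P`, hence discrete and bounded below. The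
lowest-order coefficients are read off from `g_{ai} g^{ib} = δ_a^b` in degree `0 = -v + v`.
-/

open Set Function Filter

namespace Set

def LocallyFiniteBelow (A : Set ℝ) : Prop := ∀ M : ℝ, (A ∩ Iic M).Finite

variable {A B : Set ℝ}

theorem LocallyFiniteBelow.mono (hB : B.LocallyFiniteBelow) (hAB : A ⊆ B) :
    A.LocallyFiniteBelow :=
  fun M => (hB M).subset (inter_subset_inter_left _ hAB)

theorem locallyFiniteBelow_iff : A.LocallyFiniteBelow ↔ DiscreteSubset A ∧ BddBelow A := by
  constructor
  · intro hA
    refine ⟨fun x hx => ?_, ((hA 0).bddBelow.union (bddBelow_Ici (a := 0))).mono fun y hy => ?_⟩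
    · have hxA : AccPt x (𝓟 (A ∩ Iic (x + 1))) := by
        rw [accPt_iff_nhds] at hx ⊢
        intro U hU
        obtain ⟨y, ⟨hyU, hyA⟩, hyx⟩ :=
          hx (U ∩ Iio (x + 1)) (inter_mem hU (Iio_mem_nhds (by linarith)))
        exact ⟨y, ⟨hyU.1, hyA, mem_Iic.2 (mem_Iio.1 hyU.2).le⟩, hyx⟩
      exact Set.Infinite.of_accPt hxA (hA (x + 1))
    · rcases le_total y 0 with h | h
      exacts [Or.inl ⟨hy, h⟩, Or.inr h]
  · rintro ⟨hdisc, a, ha⟩ M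
    by_contra hinf
    obtain ⟨x, -, hx⟩ := Set.Infinite.exists_accPt_of_subset_isCompact hinf isCompact_Icc
      (fun y hy => ⟨ha hy.1, hy.2⟩ : A ∩ Iic M ⊆ Icc a M)
    exact hdisc x (hx.mono (principal_mono.2 inter_subset_left))

theorem LocallyFiniteBelow.isPWO (hA : A.LocallyFiniteBelow) : A.IsPWO := by
  refine IsWF.isPWO (isWF_iff_no_descending_seq.2 fun f hf hfA => ?_)
  refine infinite_range_of_injective hf.injective ((hA (f 0)).subset ?_)
  rintro _ ⟨k, rfl⟩
  exact ⟨hfA k, hf.antitone (Nat.zero_le k)⟩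

theorem LocallyFiniteBelow.image_add_left (hA : A.LocallyFiniteBelow) (c : ℝ) :
    ((c + ·) '' A).LocallyFiniteBelow := by
  intro M
  refine ((hA (M - c)).image (c + ·)).subset ?_
  rintro _ ⟨⟨a, ha, rfl⟩, hM⟩
  exact ⟨a, ⟨ha, by simp only [mem_Iic] at hM ⊢; linarith⟩, rfl⟩

theorem locallyFiniteBelow_iUnion {ι : Type*} [Finite ι] {A : ι → Set ℝ}
    (hA : ∀ i, (A i).LocallyFiniteBelow) : (⋃ i, A i).LocallyFiniteBelow := by
  intro M
  rw [iUnion_inter]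
  exact finite_iUnion fun i => hA i M

theorem addSubmonoidClosure_subset_Ici_zero (hA : A ⊆ Ici 0) :
    (AddSubmonoid.closure A : Set ℝ) ⊆ Ici 0 :=
  fun _ hx => AddSubmonoid.mem_nonneg.1 <|
    AddSubmonoid.closure_le.2 (fun _ ha => AddSubmonoid.mem_nonneg.2 (hA ha)) hx

theorem locallyFiniteBelow_addSubmonoidClosure_finset (s : Finset ℝ) (hs : ∀ a ∈ s, 0 < a) :
    (AddSubmonoid.closure (s : Set ℝ) : Set ℝ).LocallyFiniteBelow := by
  classical
  induction s using Finset.induction_on with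
  | empty =>
    simp only [Finset.coe_empty, AddSubmonoid.closure_empty, AddSubmonoid.coe_bot]
    exact fun M => (finite_singleton 0).subset inter_subset_left
  | insert a s _ ih =>
    intro M
    have ha : 0 < a := hs a (Finset.mem_insert_self a s)
    have hnonneg := addSubmonoidClosure_subset_Ici_zero (A := (s : Set ℝ))
      fun b hb => (hs b (Finset.mem_insert_of_mem hb)).le
    refine ((((finite_Iic ⌈M / a⌉₊).image (· • a)).image2 (· + ·)
      (ih (fun b hb => hs b (Finset.mem_insert_of_mem hb)) M))).subset ?_
    rintro x ⟨hx, hxM⟩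
    rw [Finset.coe_insert, insert_eq, AddSubmonoid.closure_union, SetLike.mem_coe,
      AddSubmonoid.mem_sup] at hx
    obtain ⟨_, hy, z, hz, rfl⟩ := hx
    obtain ⟨k, rfl⟩ := AddSubmonoid.mem_closure_singleton.1 hy
    have hz0 : 0 ≤ z := hnonneg hz
    have hka : 0 ≤ k • a := nsmul_nonneg ha.le k
    have hxM' := mem_Iic.1 hxM
    refine ⟨k • a, ⟨k, mem_Iic.2 ?_, rfl⟩, z, ⟨hz, mem_Iic.2 (by linarith)⟩, rfl⟩
    have : (k : ℝ) ≤ M / a := by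
      rw [le_div_iff₀ ha, ← nsmul_eq_mul]
      linarith
    exact_mod_cast this.trans (Nat.le_ceil _)

theorem LocallyFiniteBelow.addSubmonoidClosure (hA : A.LocallyFiniteBelow) (h0 : A ⊆ Ici 0) :
    (AddSubmonoid.closure A : Set ℝ).LocallyFiniteBelow := by
  intro M
  have hF : (A ∩ Ioc 0 M).Finite := (hA M).subset fun x hx => ⟨hx.1, hx.2.2⟩
  refine (locallyFiniteBelow_addSubmonoidClosure_finset hF.toFinset (fun a ha => ?_) M).subset ?_
  · exact ((hF.mem_toFinset).1 ha).2.1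
  -- a sum of nonnegative generators that is at most `M` only uses generators in `(0, M]`
  rintro x ⟨hx, hxM⟩
  refine ⟨?_, hxM⟩
  rw [hF.coe_toFinset]
  revert hxM
  induction hx using AddSubmonoid.closure_induction with
  | mem a ha =>
    intro haM
    rcases (mem_Ici.1 (h0 ha)).eq_or_lt with rfl | hpos
    · exact zero_mem _
    · exact AddSubmonoid.subset_closure ⟨ha, hpos, haM⟩
  | zero => exact fun _ => zero_mem _
  | add x y hx hy ihx ihy =>
    intro hxy
    have hx0 := mem_Ici.1 (addSubmonoidClosure_subset_Ici_zero h0 hx)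
    have hy0 := mem_Ici.1 (addSubmonoidClosure_subset_Ici_zero h0 hy)
    have hxyM := mem_Iic.1 hxy
    exact add_mem (ihx (mem_Iic.2 (by linarith))) (ihy (mem_Iic.2 (by linarith)))

end Set

namespace HahnSeries

section OrderedCancel

variable {Γ R : Type*} [AddCommMonoid Γ] [PartialOrder Γ] [IsOrderedCancelAddMonoid Γ]

theorem support_single_mul_subset [NonUnitalNonAssocSemiring R] (c : Γ) (r : R)
    (x : HahnSeries Γ R) : (single c r * x).support ⊆ (c + ·) '' x.support := by
  intro m hm
  obtain ⟨i, hi, j, hj, rfl⟩ := support_mul_subset hm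
  obtain rfl := support_single_subset hi
  exact ⟨j, hj, rfl⟩

theorem coeff_zero_mul_of_nonneg [NonUnitalNonAssocSemiring R] (hΓ : ∀ γ : Γ, 0 ≤ γ)
    (x y : HahnSeries Γ R) : (x * y).coeff 0 = x.coeff 0 * y.coeff 0 := by
  classical
  rw [coeff_mul, Finset.sum_subset (s₂ := {(0, 0)}) ?_ ?_, Finset.sum_singleton]
  · intro ij hij
    obtain ⟨h1, h2⟩ :=
      (add_eq_zero_iff_of_nonneg (hΓ _) (hΓ _)).1 (Finset.mem_antidiagonal.1 hij).2.2
    simp [Prod.ext_iff, h1, h2]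
  · rintro _ h hnot
    obtain rfl := Finset.mem_singleton.1 h
    rw [Finset.mem_antidiagonal] at hnot
    simp only [mem_support, add_zero, and_true, not_and_or, not_not] at hnot
    rcases hnot with h | h <;> simp [h]

def coeffZeroRingHom [Semiring R] (hΓ : ∀ γ : Γ, 0 ≤ γ) : HahnSeries Γ R →+* R where
  toFun x := x.coeff 0
  map_one' := by simp
  map_mul' := coeff_zero_mul_of_nonneg hΓ
  map_zero' := rfl
  map_add' _ _ := rfl

end OrderedCancel

section LinearOrderedCancel

variable {Γ R : Type*} [AddCommMonoid Γ] [LinearOrder Γ] [IsOrderedCancelAddMonoid Γ]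
  [CommRing R]

theorem isUnit_of_isUnit_coeff_zero (hΓ : ∀ γ : Γ, 0 ≤ γ) {x : HahnSeries Γ R}
    (hx : IsUnit (x.coeff 0)) : IsUnit x := by
  nontriviality R
  have horder : x.order = 0 := le_antisymm (order_le_of_coeff_ne_zero hx.ne_zero) (hΓ _)
  refine isUnit_of_isUnit_leadingCoeff_AddUnitOrder ?_ (horder ▸ isAddUnit_zero)
  rwa [leadingCoeff_eq, horder]

theorem _root_.Matrix.isUnit_of_isUnit_map_coeff_zero {ι : Type*} [Fintype ι] [DecidableEq ι]
    (hΓ : ∀ γ : Γ, 0 ≤ γ) {M : Matrix ι ι (HahnSeries Γ R)}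
    (hM : IsUnit (M.map fun x => x.coeff 0)) : IsUnit M := by
  rw [Matrix.isUnit_iff_isUnit_det] at hM ⊢
  refine isUnit_of_isUnit_coeff_zero hΓ ?_
  convert hM using 1
  exact (coeffZeroRingHom hΓ).map_det M

end LinearOrderedCancel

variable {R : Type*} [CommRing R]

theorem exists_mul_eq_one_of_support_subset {ι : Type*} [Fintype ι] [DecidableEq ι]
    {P : AddSubmonoid ℝ} (hP0 : (P : Set ℝ) ⊆ Ici 0) (hP : (P : Set ℝ).IsWF)
    {H : Matrix ι ι (HahnSeries ℝ R)} (hH : ∀ a b, (H a b).support ⊆ P)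
    (hunit : IsUnit (H.map fun x => x.coeff 0)) :
    ∃ K : Matrix ι ι (HahnSeries ℝ R), H * K = 1 ∧ ∀ a b, (K a b).support ⊆ P := by
  have : WellFoundedLT P := ⟨hP⟩
  let incl : HahnSeries P R →+* HahnSeries ℝ R :=
    embDomainRingHom P.subtype Subtype.val_injective fun _ _ => Iff.rfl
  let H' : Matrix ι ι (HahnSeries P R) :=
    .of fun a b => { coeff := fun p => (H a b).coeff p, isPWO_support' := .of_linearOrder _ }
  have hH' : H'.map incl = H := by
    ext a b m
    by_cases hm : m ∈ P
    · exact embDomain_coeff (a := (⟨m, hm⟩ : P))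
    · exact (embDomain_of_notMem_range (by simpa using hm)).trans
        (notMem_support.1 fun h => hm (hH a b h)).symm
  obtain ⟨K', hK'⟩ := (Matrix.isUnit_of_isUnit_map_coeff_zero (fun p => hP0 p.2) hunit
    : IsUnit H').exists_right_inv
  refine ⟨K'.map incl, ?_, fun a b => ?_⟩
  · rw [← hH', ← Matrix.map_mul, hK', Matrix.map_one _ incl.map_zero incl.map_one]
  · refine support_embDomain_subset.trans ?_
    rintro _ ⟨p, -, rfl⟩
    exact p.2

theorem exists_mul_eq_one_of_locallyFiniteBelow {ι : Type*} [Fintype ι] [DecidableEq ι] {v : ℝ}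
    {G : Matrix ι ι (HahnSeries ℝ R)} (hG : ∀ a b, (G a b).support.LocallyFiniteBelow)
    (hGv : ∀ a b, (G a b).support ⊆ Ici (-v)) (hunit : IsUnit (G.map fun x => x.coeff (-v))) :
    ∃ K : Matrix ι ι (HahnSeries ℝ R), G * K = 1 ∧
      ∀ a b, (K a b).support.LocallyFiniteBelow ∧ (K a b).support ⊆ Ici v := by
  let X : HahnSeries ℝ R := single v 1
  let S : Set ℝ := ⋃ a, ⋃ b, (v + ·) '' (G a b).support
  have hS0 : S ⊆ Ici 0 := by
    simp only [S, iUnion_subset_iff, image_subset_iff]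
    intro a b x hx
    simp only [mem_preimage, mem_Ici] at hx ⊢
    linarith [mem_Ici.1 (hGv a b hx)]
  have hS : S.LocallyFiniteBelow :=
    locallyFiniteBelow_iUnion fun a => locallyFiniteBelow_iUnion fun b => (hG a b).image_add_left v
  have hP := hS.addSubmonoidClosure hS0
  obtain ⟨K, hXGK, hK⟩ := exists_mul_eq_one_of_support_subset (H := X • G)
    (addSubmonoidClosure_subset_Ici_zero hS0) hP.isPWO.isWF
    (fun a b => (support_single_mul_subset v 1 (G a b)).trans <|
      (subset_iUnion₂ (s := fun a b => (v + ·) '' (G a b).support) a b).trans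
        AddSubmonoid.subset_closure)
    (by
      convert hunit using 1
      ext a b
      rw [Matrix.map_apply, Matrix.map_apply, Matrix.smul_apply, smul_eq_mul, ← neg_add_cancel v]
      exact (coeff_single_mul_add.trans (one_mul _)))
  refine ⟨X • K, by rwa [Matrix.mul_smul, ← Matrix.smul_mul], fun a b => ⟨?_, ?_⟩⟩
  · exact ((hP.mono (hK a b)).image_add_left v).mono (support_single_mul_subset v 1 (K a b))
  · refine (support_single_mul_subset v 1 (K a b)).trans ?_
    rintro _ ⟨p, hp, rfl⟩
    simpa using addSubmonoidClosure_subset_Ici_zero hS0 (hK a b hp)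

end HahnSeries

section Cauchy

variable {R : Type*} [CommRing R]

def DBBSupp.toHahnSeries {f : ℝ → R} (hf : DBBSupp f) : HahnSeries ℝ R :=
  ⟨f, (locallyFiniteBelow_iff.2 hf).isPWO⟩

theorem cauchy_coeff_eq_coeff_mul (x y : HahnSeries ℝ R) :
    cauchy x.coeff y.coeff = (x * y).coeff := by
  classical
  funext m
  let s := Finset.antidiagonal x.isPWO_support y.isPWO_support m
  have hsupp : support (fun p => x.coeff p * y.coeff (m - p)) ⊆ s.image Prod.fst := by
    intro p hp
    refine Finset.mem_image.2 ⟨(p, m - p), Finset.mem_antidiagonal.2 ⟨?_, ?_, by ring⟩, rfl⟩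
    · exact left_ne_zero_of_mul hp
    · exact right_ne_zero_of_mul hp
  rw [cauchy, finsum_eq_finsetSum_of_support_subset _ hsupp, HahnSeries.coeff_mul,
    Finset.sum_image fun ij hij kl hkl h => ?_]
  · refine Finset.sum_congr rfl fun ij hij => ?_
    rw [← (Finset.mem_antidiagonal.1 hij).2.2, add_sub_cancel_left]
  · have h1 := (Finset.mem_antidiagonal.1 hij).2.2
    have h2 := (Finset.mem_antidiagonal.1 hkl).2.2
    exact Prod.ext h (by linarith)

theorem cauchy_add_of_support_subset {f g : ℝ → R} {s t : ℝ} (hf : support f ⊆ Ici s)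
    (hg : support g ⊆ Ici t) : cauchy f g (s + t) = f s * g t := by
  rw [cauchy, finsum_eq_single _ s fun p hp => ?_, add_sub_cancel_left]
  rcases lt_or_gt_of_ne hp with h | h
  · rw [notMem_support.1 fun hp => h.not_ge (hf hp), zero_mul]
  · rw [notMem_support.1 fun hp => (mem_Ici.1 (hg hp)).not_gt (by linarith), mul_zero]

variable {ι : Type*} [Fintype ι] [DecidableEq ι]

/-- The relation `g_{ai} g^{ib} = δ_a^b` in R⟪X⟫. -/
def IsCauchyRightInverse (g ginv : ι → ι → ℝ → R) : Prop :=
  ∀ a b, (fun m => ∑ i, cauchy (g a i) (ginv i b) m) = fun m => if a = b then oneX m else 0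

theorem isCauchyRightInverse_coeff_iff (G K : Matrix ι ι (HahnSeries ℝ R)) :
    IsCauchyRightInverse (fun a b => (G a b).coeff) (fun a b => (K a b).coeff) ↔ G * K = 1 := by
  simp only [IsCauchyRightInverse, cauchy_coeff_eq_coeff_mul, ← Matrix.ext_iff,
    ← HahnSeries.coeff_inj]
  refine forall₂_congr fun a b => Eq.congr ?_ ?_
  · ext m
    rw [Matrix.mul_apply, HahnSeries.coeff_sum]
  · ext m
    rw [Matrix.one_apply]
    split_ifs <;> simp [HahnSeries.coeff_one, oneX]

theorem IsCauchyRightInverse.lowestCoeff_mul_eq_one {g ginv : ι → ι → ℝ → R} {v : ℝ}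
    (h : IsCauchyRightInverse g ginv) (hg : ∀ a b, support (g a b) ⊆ Ici (-v))
    (hginv : ∀ a b, support (ginv a b) ⊆ Ici v) :
    Matrix.of (fun a b => g a b (-v)) * Matrix.of (fun a b => ginv a b v) = 1 := by
  ext a b
  have key := congrFun (h a b) (-v + v)
  rw [Finset.sum_congr rfl fun i _ => cauchy_add_of_support_subset (hg a i) (hginv i b),
    neg_add_cancel] at key
  simpa [Matrix.mul_apply, Matrix.one_apply, oneX] using key

end Cauchy

open Classical in
theorem formal_metric_inverse_general {R : Type*} [CommRing R] (n : ℕ)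
    (v : ℝ) (g : Fin n → Fin n → (ℝ → R))
    (hsym : ∀ a b, g a b = g b a)
    (hdbb : ∀ a b, DBBSupp (g a b))
    (hsupp : ∀ a b, Function.support (g a b) ⊆ Set.Ici (-v))
    (hunit : IsUnit (Matrix.of (fun a b => g a b (-v)) : Matrix (Fin n) (Fin n) R)) :
    (∃! ginv : Fin n → Fin n → (ℝ → R),
      (∀ a b, ginv a b = ginv b a) ∧
      (∀ a b, DBBSupp (ginv a b)) ∧
      (∀ a b, Function.support (ginv a b) ⊆ Set.Ici v) ∧
      (∀ a b, (fun m => ∑ i : Fin n, cauchy (g a i) (ginv i b) m)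
        = fun m => if a = b then oneX m else 0)) ∧
    (∀ ginv : Fin n → Fin n → (ℝ → R),
      (∀ a b, ginv a b = ginv b a) →
      (∀ a b, DBBSupp (ginv a b)) →
      (∀ a b, Function.support (ginv a b) ⊆ Set.Ici v) →
      (∀ a b, (fun m => ∑ i : Fin n, cauchy (g a i) (ginv i b) m)
        = fun m => if a = b then oneX m else 0) →
      (Matrix.of (fun a b => g a b (-v)) : Matrix (Fin n) (Fin n) R)
        * Matrix.of (fun a b => ginv a b v) = 1) := by
  let G : Matrix (Fin n) (Fin n) (HahnSeries ℝ R) := .of fun a b => (hdbb a b).toHahnSeries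
  obtain ⟨K, hGK, hK⟩ := HahnSeries.exists_mul_eq_one_of_locallyFiniteBelow (G := G)
    (fun a b => locallyFiniteBelow_iff.2 (hdbb a b)) hsupp hunit
  have hKsymm : K.transpose = K := by
    have hG : G.transpose = G := by
      ext a b m
      exact congrFun (hsym b a) m
    rw [← Matrix.inv_eq_right_inv hGK, Matrix.transpose_nonsing_inv, hG]
  refine ⟨⟨fun a b => (K a b).coeff, ?_, ?_⟩, fun ginv _ _ hginv h =>
    IsCauchyRightInverse.lowestCoeff_mul_eq_one h hsupp hginv⟩
  · exact ⟨fun a b => congrArg HahnSeries.coeff (congrFun₂ hKsymm b a),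
      fun a b => locallyFiniteBelow_iff.1 (hK a b).1, fun a b => (hK a b).2,
      (isCauchyRightInverse_coeff_iff G K).2 hGK⟩
  · rintro ginv ⟨-, hdbb', -, h⟩
    let K' : Matrix (Fin n) (Fin n) (HahnSeries ℝ R) := .of fun a b => (hdbb' a b).toHahnSeries
    have hK' : K' = K := by
      rw [← Matrix.inv_eq_right_inv ((isCauchyRightInverse_coeff_iff G K').1 h),
        Matrix.inv_eq_right_inv hGK]
    funext a b
    exact congrArg HahnSeries.coeff (congrFun₂ hK' a b)

open Classical in
/-- a symmetric family (g_{ab}) in R⟪X⟫ supported in [-v,∞) whose matrix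
of lowest-order coefficients is invertible has a unique symmetric inverse family
(g^{ab}) in R⟪X⟫ supported in [v,∞) with g_{ai}g^{ib} = δ_a^b, and the lowest-order
coefficients of the inverse family form the inverse matrix of ((g_{ab})(-v)). -/
theorem formal_metric_inverse {R : Type*} [CommRing R] (n : ℕ) (hn : 2 ≤ n)
    (v : ℝ) (g : Fin n → Fin n → (ℝ → R))
    (hsym : ∀ a b, g a b = g b a)
    (hdbb : ∀ a b, DBBSupp (g a b))
    (hsupp : ∀ a b, Function.support (g a b) ⊆ Set.Ici (-v))
    (hunit : IsUnit (Matrix.of (fun a b => g a b (-v)) : Matrix (Fin n) (Fin n) R)) :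
    (∃! ginv : Fin n → Fin n → (ℝ → R),
      (∀ a b, ginv a b = ginv b a) ∧
      (∀ a b, DBBSupp (ginv a b)) ∧
      (∀ a b, Function.support (ginv a b) ⊆ Set.Ici v) ∧
      (∀ a b, (fun m => ∑ i : Fin n, cauchy (g a i) (ginv i b) m)
        = fun m => if a = b then oneX m else 0)) ∧
    (∀ ginv : Fin n → Fin n → (ℝ → R),
      (∀ a b, ginv a b = ginv b a) →
      (∀ a b, DBBSupp (ginv a b)) →
      (∀ a b, Function.support (ginv a b) ⊆ Set.Ici v) →
      (∀ a b, (fun m => ∑ i : Fin n, cauchy (g a i) (ginv i b) m)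
        = fun m => if a = b then oneX m else 0) →
      (Matrix.of (fun a b => g a b (-v)) : Matrix (Fin n) (Fin n) R)
        * Matrix.of (fun a b => ginv a b v) = 1) :=
  formal_metric_inverse_general n v g hsym hdbb hsupp hunit
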